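/- arXiv:2312.08691 — 3 statements merged into one kernel-verified Lean document; each statement's English description precedes it below -/
import Mathlib

section
/- Let A = (a_{ij}) be an n×n real matrix such that D(A) belongs to the class 𝒟, D(A) is strongly connected, and Δ_A ≠ 0. Let B = (b_{ij}) be the n×n matrix with entries b_{ij} = μ_{ij}/Δ_A. Then ABA = A. -/
open Matrix

/-- Adjacency in a digraph given by relation `G`: a 2-cycle between distinct `i` and `j`. -/
def Adjd {n : ℕ} (G : Fin n → Fin n → Prop) (i j : Fin n) : Prop :=
  i ≠ j ∧ G i j ∧ G j i

/-- `G` is a simple symmetric digraph: no loops and edges come in both directions. -/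
def IsSSD {n : ℕ} (G : Fin n → Fin n → Prop) : Prop :=
  (∀ i, ¬ G i i) ∧ ∀ i j, G i j → G j i

/-- A vertex is pendant if it is incident to exactly one 2-cycle. -/
def Pendant {n : ℕ} (G : Fin n → Fin n → Prop) (i : Fin n) : Prop :=
  ∃! j, Adjd G i j

/-- The class 𝒟: simple symmetric digraphs in which every non-pendant vertex is
adjacent to at least one pendant vertex. -/
def InClassD {n : ℕ} (G : Fin n → Fin n → Prop) : Prop :=
  IsSSD G ∧ ∀ i, ¬ Pendant G i → ∃ j, Adjd G i j ∧ Pendant G j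

/-- Strong connectivity: a directed path from every vertex to every other vertex. -/
def StronglyConnected {n : ℕ} (G : Fin n → Fin n → Prop) : Prop :=
  ∀ i j : Fin n, Relation.ReflTransGen G i j

/-- An unordered pair `e` is a 2-cycle of `G`. -/
def IsEdge {n : ℕ} (G : Fin n → Fin n → Prop) (e : Sym2 (Fin n)) : Prop :=
  ∃ i j, e = s(i, j) ∧ Adjd G i j

/-- A matching: a set of pairwise vertex-disjoint 2-cycles. -/
def IsMatching {n : ℕ} (G : Fin n → Fin n → Prop) (M : Finset (Sym2 (Fin n))) : Prop :=
  (∀ e ∈ M, IsEdge G e) ∧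
  ∀ e ∈ M, ∀ f ∈ M, e ≠ f → ∀ v : Fin n, v ∈ e → v ∉ f

/-- A maximum matching: a matching of maximum cardinality. -/
def IsMaxMatching {n : ℕ} (G : Fin n → Fin n → Prop) (M : Finset (Sym2 (Fin n))) : Prop :=
  IsMatching G M ∧ ∀ M', IsMatching G M' → M'.card ≤ M.card

/-- A cycle chain, recorded by its list of (distinct) vertices `i₁, …, i_{m+1}`. -/
def IsCycleChain {n : ℕ} (G : Fin n → Fin n → Prop) (c : List (Fin n)) : Prop :=
  c.Nodup ∧ 2 ≤ c.length ∧ c.Chain' (Adjd G)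

/-- A cycle chain from `i` to `j`. -/
def IsCycleChainBtw {n : ℕ} (G : Fin n → Fin n → Prop) (i j : Fin n) (c : List (Fin n)) : Prop :=
  IsCycleChain G c ∧ c.head? = some i ∧ c.getLast? = some j

/-- The list of 2-cycles of a cycle chain. -/
def chainEdges {n : ℕ} (c : List (Fin n)) : List (Sym2 (Fin n)) :=
  List.zipWith (fun a b => s(a, b)) c c.tail

/-- The cycle chain `c` is alternating with respect to `M`: its 2-cycles are alternately
in `M` and outside `M`, with the first and last 2-cycle in `M` (so its length is odd). -/
def IsAltChain {n : ℕ} (M : Finset (Sym2 (Fin n))) (c : List (Fin n)) : Prop :=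
  Odd (chainEdges c).length ∧
  ∀ k (h : k < (chainEdges c).length), ((chainEdges c).get ⟨k, h⟩ ∈ M ↔ Even k)

/-- The digraph of a square matrix: edge `(i,j)` iff `A i j ≠ 0`. -/
def DA {n : ℕ} (A : Matrix (Fin n) (Fin n) ℝ) : Fin n → Fin n → Prop :=
  fun i j => A i j ≠ 0

/-- The cycle product `a_{ij} a_{ji}` of a 2-cycle. -/
def cycProd {n : ℕ} (A : Matrix (Fin n) (Fin n) ℝ) (e : Sym2 (Fin n)) : ℝ :=
  Sym2.lift ⟨fun i j => A i j * A j i, fun i j => mul_comm _ _⟩ e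

/-- The matching product η(M) of a matching `M`. -/
noncomputable def matchProd {n : ℕ} (A : Matrix (Fin n) (Fin n) ℝ)
    (M : Finset (Sym2 (Fin n))) : ℝ :=
  ∏ e ∈ M, cycProd A e

/-- The (finite) collection of all maximum matchings of `D(A)`. -/
noncomputable def maxMatchings {n : ℕ} (A : Matrix (Fin n) (Fin n) ℝ) :
    Finset (Finset (Sym2 (Fin n))) :=
  {M | IsMaxMatching (DA A) M}.toFinite.toFinset

/-- Δ_A: the sum of the matching products over all maximum matchings of `D(A)`. -/
noncomputable def Delta {n : ℕ} (A : Matrix (Fin n) (Fin n) ℝ) : ℝ :=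
  ∑ M ∈ maxMatchings A, matchProd A M

/-- 𝕄(i,j): maximum matchings with respect to which some cycle chain from `i` to `j`
is an alternating cycle chain. -/
def MMset {n : ℕ} (A : Matrix (Fin n) (Fin n) ℝ) (i j : Fin n) :
    Set (Finset (Sym2 (Fin n))) :=
  {M | IsMaxMatching (DA A) M ∧ ∃ c, IsCycleChainBtw (DA A) i j c ∧ IsAltChain M c}

/-- `i` and `j` are maximally matchable: 𝕄(i,j) ≠ ∅. -/
def MaxMatchable {n : ℕ} (A : Matrix (Fin n) (Fin n) ℝ) (i j : Fin n) : Prop :=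
  (MMset A i j).Nonempty

open scoped Classical in
/-- The (unique) alternating cycle chain from `i` to `j`, when it exists. -/
noncomputable def theChain {n : ℕ} (A : Matrix (Fin n) (Fin n) ℝ) (i j : Fin n) :
    List (Fin n) :=
  if h : ∃ c, IsCycleChainBtw (DA A) i j c ∧ ∃ M ∈ MMset A i j, IsAltChain M c
  then h.choose else []

/-- The path product along a cycle chain: `a_{i₁ i₂} a_{i₂ i₃} ⋯ a_{i_m i_{m+1}}`. -/
def pathProd {n : ℕ} (A : Matrix (Fin n) (Fin n) ℝ) (c : List (Fin n)) : ℝ :=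
  (List.zipWith (fun a b => A a b) c c.tail).prod

open scoped Classical in
/-- β_{ij} = (−1)^{(m−1)/2} P_m(i,j) for maximally matchable `i, j`, and `0` otherwise. -/
noncomputable def beta {n : ℕ} (A : Matrix (Fin n) (Fin n) ℝ) (i j : Fin n) : ℝ :=
  if MaxMatchable A i j then
    (-1 : ℝ) ^ (((theChain A i j).length - 2) / 2) * pathProd A (theChain A i j)
  else 0

/-- β̄_{i,j}(M): product of the cycle products of the 2-cycles of `M` not contained in
the alternating cycle chain from `i` to `j`. -/
noncomputable def betaBar {n : ℕ} (A : Matrix (Fin n) (Fin n) ℝ) (i j : Fin n)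
    (M : Finset (Sym2 (Fin n))) : ℝ :=
  ∏ e ∈ M.filter (fun e => e ∉ chainEdges (theChain A i j)), cycProd A e

/-- μ_{ij} = β_{ij} · Σ_{M ∈ 𝕄(i,j)} β̄_{i,j}(M). -/
noncomputable def mu {n : ℕ} (A : Matrix (Fin n) (Fin n) ℝ) (i j : Fin n) : ℝ :=
  beta A i j * ∑ M ∈ (MMset A i j).toFinite.toFinset, betaBar A i j M

/-- `X` is a group inverse of `A`. -/
def IsGroupInverse {n : ℕ} (A X : Matrix (Fin n) (Fin n) ℝ) : Prop :=
  A * X * A = A ∧ X * A * X = X ∧ A * X = X * A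

/-- A tree digraph: strongly connected and all of its cycles have length 2. -/
def IsTreeDigraph {n : ℕ} (G : Fin n → Fin n → Prop) : Prop :=
  StronglyConnected G ∧
  ∀ (a : Fin n) (l : List (Fin n)), (a :: l).Nodup → List.Chain G a l →
    G ((a :: l).getLast (List.cons_ne_nil a l)) a → (a :: l).length = 2

/-- A star tree digraph: a tree digraph with a center adjacent to every other vertex,
every other vertex being adjacent only to the center. -/
def IsStarTree {n : ℕ} (G : Fin n → Fin n → Prop) : Prop :=
  IsTreeDigraph G ∧
  ∃ c : Fin n, (∀ j, j ≠ c → Adjd G c j) ∧ ∀ i j, Adjd G i j → i = c ∨ j = c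

/-- A corona digraph: a simple symmetric digraph in which each non-pendant vertex is
adjacent to exactly one pendant vertex. -/
def IsCorona {n : ℕ} (G : Fin n → Fin n → Prop) : Prop :=
  IsSSD G ∧ ∀ i, ¬ Pendant G i → ∃! j, Adjd G i j ∧ Pendant G j

/-- 𝕄(i): the maximum matchings in which vertex `i` is matched. -/
noncomputable def MMi {n : ℕ} (A : Matrix (Fin n) (Fin n) ℝ) (i : Fin n) :
    Finset (Finset (Sym2 (Fin n))) :=
  {M | IsMaxMatching (DA A) M ∧ ∃ e ∈ M, i ∈ e}.toFinite.toFinset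

open Finset

/-!
Call `N` a support set of a digraph if every vertex outside `N` is a leaf (a pendant vertex),
no two leaves are adjacent and every vertex of `N` has a leaf neighbour. In the class 𝒟 the
non-pendant vertices form a support set, unless two pendant vertices are adjacent; then strong
connectivity forces `D(A)` to be a single 2-cycle, and either of its vertices is a support set.

Relative to a support set `N`, the maximum matchings are exactly the choices of one leaf
neighbour for every `u ∈ N`, so `Δ_A = ∏_{u ∈ N} S u` with `S u = ∑_{x ∉ N} a_{ux} a_{xu}`
(`leafSum`). An alternating cycle chain is either a single leaf edge or a path `x, u, w, y`
between two leaves. Evaluating `μ` on these gives `B = X + Y - Y A X` (`supportInverse`), where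
`X u x = a_{ux} / S u` and `Y x u = a_{xu} / S u` for `u ∈ N`, `x ∉ N` (`leafLeftInv`,
`leafRightInv`). With `P` the diagonal indicator of `N`, `X A = P = A Y` and
`(1 - P) A (1 - P) = 0`, and in any ring these identities give
`A (X + Y - Y A X) A = A P + P A - P A P = A`.
-/

theorem mul_add_sub_mul_mul_eq_self {R : Type*} [Ring R] {A X Y P : R}
    (hX : X * A = P) (hY : A * Y = P) (hA : (1 - P) * A * (1 - P) = 0) :
    A * (X + Y - Y * A * X) * A = A :=
  calc A * (X + Y - Y * A * X) * A = A * (X * A) + A * Y * A - A * Y * A * (X * A) := by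
        noncomm_ring
    _ = A - (1 - P) * A * (1 - P) := by rw [hX, hY]; noncomm_ring
    _ = A := by rw [hA, sub_zero]

lemma Finset.sum_piFinset_prod_of_card_eq_one {ι κ R : Type*} [Fintype ι] [DecidableEq ι]
    [CommSemiring R] {t : ι → Finset κ} {s : Finset ι}
    (ht : ∀ i ∉ s, (t i).card = 1) (w : ι → κ → R) :
    ∑ f ∈ Fintype.piFinset t, ∏ i ∈ s, w i (f i) = ∏ i ∈ s, ∑ x ∈ t i, w i x := by
  calc ∑ f ∈ Fintype.piFinset t, ∏ i ∈ s, w i (f i)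
      = ∑ f ∈ Fintype.piFinset t, ∏ i, if i ∈ s then w i (f i) else 1 := by
        simp only [prod_ite_mem, univ_inter]
    _ = ∏ i, ∑ x ∈ t i, if i ∈ s then w i x else 1 := by rw [prod_univ_sum]
    _ = ∏ i, if i ∈ s then ∑ x ∈ t i, w i x else 1 := by
        refine prod_congr rfl fun i _ => ?_
        by_cases hi : i ∈ s <;> simp [hi, ht]
    _ = ∏ i ∈ s, ∑ x ∈ t i, w i x := by rw [prod_ite_mem, univ_inter]

lemma Fintype.filter_piFinset_forall_eq {ι κ : Type*} [Fintype ι] [DecidableEq ι]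
    {t : ι → Finset κ} {K : Finset ι} {g : ι → κ}
    [DecidablePred fun f : ι → κ => ∀ i ∈ K, f i = g i] (hg : ∀ i ∈ K, g i ∈ t i) :
    (Fintype.piFinset t).filter (fun f : ι → κ => ∀ i ∈ K, f i = g i) =
      Fintype.piFinset fun i => if i ∈ K then {g i} else t i := by
  ext f
  simp only [mem_filter, Fintype.mem_piFinset]
  constructor
  · rintro ⟨hf, hK⟩ i
    split_ifs with hi
    exacts [mem_singleton.2 (hK i hi), hf i]
  · intro hf
    have hK : ∀ i ∈ K, f i = g i := fun i hi => by simpa [hi] using hf i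
    refine ⟨fun i => ?_, hK⟩
    by_cases hi : i ∈ K
    · exact hK i hi ▸ hg i hi
    · simpa [hi] using hf i

section LeafInverse

variable {ι K : Type*} [Fintype ι] [DecidableEq ι] [Field K] (A : Matrix ι ι K) (N : Finset ι)

def leafSum (u : ι) : K := ∑ x ∈ Nᶜ, A u x * A x u

def leafLeftInv : Matrix ι ι K :=
  of fun u x => if u ∈ N ∧ x ∉ N then A u x / leafSum A N u else 0

def leafRightInv : Matrix ι ι K :=
  of fun x u => if x ∉ N ∧ u ∈ N then A x u / leafSum A N u else 0

def supportInverse : Matrix ι ι K :=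
  leafLeftInv A N + leafRightInv A N - leafRightInv A N * A * leafLeftInv A N

variable {A N}

lemma leafLeftInv_mul (hA : ∀ x ∉ N, ∀ u w, u ≠ w → A u x * A x w = 0)
    (hS : ∀ u ∈ N, leafSum A N u ≠ 0) :
    leafLeftInv A N * A = diagonal fun u => if u ∈ N then 1 else 0 := by
  ext u w
  by_cases hu : u ∈ N
  · have : (leafLeftInv A N * A) u w = (∑ x ∈ Nᶜ, A u x * A x w) / leafSum A N u := by
      simp only [mul_apply, leafLeftInv, of_apply, hu, true_and, sum_div, ite_mul, zero_mul]
      rw [← sum_filter]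
      refine sum_congr (by ext; simp) fun x _ => by ring
    rw [this]
    rcases eq_or_ne u w with rfl | huw
    · rw [diagonal_apply_eq, if_pos hu]; exact div_self (hS u hu)
    · simp [huw, sum_eq_zero fun x hx => hA x (mem_compl.1 hx) u w huw]
  · simp [mul_apply, leafLeftInv, diagonal_apply, hu]

lemma mul_leafRightInv (hA : ∀ x ∉ N, ∀ u w, u ≠ w → A u x * A x w = 0)
    (hS : ∀ u ∈ N, leafSum A N u ≠ 0) :
    A * leafRightInv A N = diagonal fun u => if u ∈ N then 1 else 0 := by
  ext w u
  by_cases hu : u ∈ N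
  · have : (A * leafRightInv A N) w u = (∑ x ∈ Nᶜ, A w x * A x u) / leafSum A N u := by
      simp only [mul_apply, leafRightInv, of_apply, hu, and_true, sum_div, mul_ite, mul_zero]
      rw [← sum_filter]
      refine sum_congr (by ext; simp) fun x _ => by ring
    rw [this]
    rcases eq_or_ne w u with rfl | hwu
    · rw [diagonal_apply_eq, if_pos hu]; exact div_self (hS w hu)
    · simp [hwu, sum_eq_zero fun x hx => hA x (mem_compl.1 hx) w u hwu]
  · rcases eq_or_ne w u with rfl | hwu
    · simp [mul_apply, leafRightInv, hu]
    · simp [mul_apply, leafRightInv, hwu, hu]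

lemma supportInverse_apply_of_mem {j k : ι} (h : j ∈ N ∨ k ∈ N) :
    supportInverse A N j k = leafLeftInv A N j k + leafRightInv A N j k := by
  have : (leafRightInv A N * A * leafLeftInv A N) j k = 0 := by
    rcases h with h | h <;> simp [mul_apply, leafRightInv, leafLeftInv, h]
  rw [supportInverse, Matrix.sub_apply, Matrix.add_apply, this, sub_zero]

lemma leafRightInv_mul_mul_leafLeftInv_apply {j k u w : ι} (hj : j ∉ N) (hk : k ∉ N)
    (hu : u ∈ N) (hw : w ∈ N) (hju : ∀ v ≠ u, A j v = 0) (hwk : ∀ v ≠ w, A v k = 0) :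
    (leafRightInv A N * A * leafLeftInv A N) j k =
      A j u / leafSum A N u * A u w * (A w k / leafSum A N w) := by
  rw [mul_apply, sum_eq_single w, mul_apply, sum_eq_single u]
  · simp [leafRightInv, leafLeftInv, hj, hk, hu, hw]
  · intro v _ hv
    simp [leafRightInv, hju v hv]
  · simp
  · intro v _ hv
    simp [leafLeftInv, hwk v hv]
  · simp

theorem mul_supportInverse_mul (hleaf : ∀ x ∉ N, ∀ y ∉ N, A x y = 0)
    (hA : ∀ x ∉ N, ∀ u w, u ≠ w → A u x * A x w = 0)
    (hS : ∀ u ∈ N, leafSum A N u ≠ 0) :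
    A * supportInverse A N * A = A := by
  refine mul_add_sub_mul_mul_eq_self (leafLeftInv_mul hA hS) (mul_leafRightInv hA hS) ?_
  ext x y
  by_cases hx : x ∈ N <;> by_cases hy : y ∈ N <;>
    simp [sub_mul, mul_sub, diagonal_mul, mul_diagonal, hx, hy, hleaf]

end LeafInverse

section SupportSet

variable {n : ℕ} {G : Fin n → Fin n → Prop}

lemma Adjd.symm {i j : Fin n} (h : Adjd G i j) : Adjd G j i := ⟨h.1.symm, h.2.2, h.2.1⟩

lemma IsEdge.adjd {a b : Fin n} (h : IsEdge G s(a, b)) : Adjd G a b := by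
  obtain ⟨i, j, he, hij⟩ := h
  rcases Sym2.eq_iff.1 he with ⟨rfl, rfl⟩ | ⟨rfl, rfl⟩
  exacts [hij, hij.symm]

lemma IsMatching.subset {M M' : Finset (Sym2 (Fin n))} (hM : IsMatching G M) (h : M' ⊆ M) :
    IsMatching G M' :=
  ⟨fun e he => hM.1 e (h he), fun e he e' he' => hM.2 e (h he) e' (h he')⟩

lemma IsMatching.card_le {M : Finset (Sym2 (Fin n))} (hM : IsMatching G M)
    {T : Finset (Fin n)} (hT : ∀ e ∈ M, ∃ v ∈ T, v ∈ e) : M.card ≤ T.card :=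
  card_le_card_of_forall_subsingleton (fun e v => v ∈ e) hT
    fun _ _ e he e' he' => by_contra fun hne => hM.2 e he.1 e' he'.1 hne _ he.2 he'.2

structure IsSupportSet (G : Fin n → Fin n → Prop) (N : Finset (Fin n)) : Prop where
  pendant : ∀ x ∉ N, Pendant G x
  not_adjd : ∀ x ∉ N, ∀ y ∉ N, ¬ Adjd G x y
  exists_adjd : ∀ u ∈ N, ∃ x ∉ N, Adjd G u x

open scoped Classical in
/-- A choice of a leaf neighbour for every vertex of `N`, normalised to the identity off `N`. -/
noncomputable def leafChoices (G : Fin n → Fin n → Prop) (N : Finset (Fin n)) :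
    Finset (Fin n → Fin n) :=
  Fintype.piFinset fun u => if u ∈ N then Nᶜ.filter (Adjd G u) else {u}

def matchingOf (s : Finset (Fin n)) (f : Fin n → Fin n) : Finset (Sym2 (Fin n)) :=
  s.image fun u => s(u, f u)

variable {N : Finset (Fin n)} {f : Fin n → Fin n}

lemma mem_leafChoices :
    f ∈ leafChoices G N ↔ (∀ u ∈ N, f u ∉ N ∧ Adjd G u (f u)) ∧ ∀ u ∉ N, f u = u := by
  simp only [leafChoices, Fintype.mem_piFinset]
  refine ⟨fun h => ⟨fun u hu => ?_, fun u hu => ?_⟩, fun h u => ?_⟩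
  · simpa [hu] using h u
  · simpa [hu] using h u
  · by_cases hu : u ∈ N
    · simpa [hu] using h.1 u hu
    · simpa [hu] using h.2 u hu

lemma injOn_mk_of_forall_notMem (hf : ∀ u ∈ N, f u ∉ N) :
    Set.InjOn (fun u => s(u, f u)) N := by
  intro u hu v hv h
  rcases Sym2.eq_iff.1 h with ⟨huv, -⟩ | ⟨huf, -⟩
  · exact huv
  · exact absurd (huf ▸ hu) (hf v hv)

lemma mk_mem_matchingOf_iff {v x : Fin n} (hx : x ∉ N) :
    s(v, x) ∈ matchingOf N f ↔ v ∈ N ∧ f v = x := by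
  simp only [matchingOf, mem_image, Sym2.eq_iff]
  constructor
  · rintro ⟨u, hu, ⟨rfl, rfl⟩ | ⟨rfl, -⟩⟩
    · exact ⟨hu, rfl⟩
    · exact absurd hu hx
  · rintro ⟨hv, rfl⟩
    exact ⟨v, hv, Or.inl ⟨rfl, rfl⟩⟩

lemma card_matchingOf (hf : f ∈ leafChoices G N) : (matchingOf N f).card = N.card :=
  card_image_of_injOn
    (injOn_mk_of_forall_notMem fun u hu => ((mem_leafChoices.1 hf).1 u hu).1)

lemma mk_notMem_matchingOf (hf : ∀ v ∈ N, f v ∉ N) {u w : Fin n} (hu : u ∈ N) (hw : w ∈ N) :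
    s(u, w) ∉ matchingOf N f := by
  simp only [matchingOf, mem_image, Sym2.eq_iff, not_exists, not_and]
  rintro v hv (⟨-, h⟩ | ⟨-, h⟩)
  exacts [hf v hv (h ▸ hw), hf v hv (h ▸ hu)]

lemma injOn_matchingOf : Set.InjOn (matchingOf N) (leafChoices G N : Set (Fin n → Fin n)) := by
  intro f hf g hg hfg
  obtain ⟨hfN, hf'⟩ := mem_leafChoices.1 hf
  obtain ⟨hgN, hg'⟩ := mem_leafChoices.1 hg
  funext u
  by_cases hu : u ∈ N
  · have h : s(u, f u) ∈ matchingOf N g :=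
      hfg ▸ (mk_mem_matchingOf_iff (hfN u hu).1).2 ⟨hu, rfl⟩
    exact ((mk_mem_matchingOf_iff (hfN u hu).1).1 h).2.symm
  · rw [hf' u hu, hg' u hu]

namespace IsSupportSet

variable (hN : IsSupportSet G N)
include hN

lemma mem_of_adjd {x u : Fin n} (hx : x ∉ N) (h : Adjd G x u) : u ∈ N := by
  by_contra hu
  exact hN.not_adjd x hx u hu h

lemma exists_mem_of_isEdge {e : Sym2 (Fin n)} (he : IsEdge G e) : ∃ u ∈ N, u ∈ e := by
  obtain ⟨x, y, rfl, hxy⟩ := he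
  by_cases hx : x ∈ N
  · exact ⟨x, hx, Sym2.mem_mk_left x y⟩
  · exact ⟨y, hN.mem_of_adjd hx hxy, Sym2.mem_mk_right x y⟩

lemma card_le_of_isMatching {M : Finset (Sym2 (Fin n))} (hM : IsMatching G M) :
    M.card ≤ N.card :=
  hM.card_le fun e he => hN.exists_mem_of_isEdge (hM.1 e he)

lemma exists_mem_leafChoices : ∃ f, f ∈ leafChoices G N := by
  choose! g hg using hN.exists_adjd
  exact ⟨fun u => if u ∈ N then g u else u, mem_leafChoices.2
    ⟨fun u hu => by simpa [hu] using hg u hu, fun u hu => by simp [hu]⟩⟩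

lemma isMatching_matchingOf (hf : f ∈ leafChoices G N) : IsMatching G (matchingOf N f) := by
  obtain ⟨hf, -⟩ := mem_leafChoices.1 hf
  refine ⟨?_, ?_⟩
  · simp only [matchingOf, forall_mem_image]
    exact fun u hu => ⟨u, f u, rfl, (hf u hu).2⟩
  · simp only [matchingOf, forall_mem_image]
    intro u hu v hv hne x hxu hxv
    have huv : u ≠ v := fun h => hne (h ▸ rfl)
    rw [Sym2.mem_iff] at hxu hxv
    rcases hxu with rfl | rfl <;> rcases hxv with h | h
    · exact huv h
    · exact (hf v hv).1 (h ▸ hu)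
    · exact (hf u hu).1 (h ▸ hv)
    · exact huv ((hN.pendant _ (hf u hu).1).unique (hf u hu).2.symm (h ▸ (hf v hv).2.symm))

lemma isMaxMatching_matchingOf (hf : f ∈ leafChoices G N) :
    IsMaxMatching G (matchingOf N f) :=
  ⟨hN.isMatching_matchingOf hf, fun _ hM' =>
    (hN.card_le_of_isMatching hM').trans (card_matchingOf hf).ge⟩

lemma card_eq_of_isMaxMatching {M : Finset (Sym2 (Fin n))} (hM : IsMaxMatching G M) :
    M.card = N.card := by
  obtain ⟨f, hf⟩ := hN.exists_mem_leafChoices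
  exact (hN.card_le_of_isMatching hM.1).antisymm
    (card_matchingOf hf ▸ hM.2 _ (hN.isMatching_matchingOf hf))

lemma exists_eq_mk_of_isMaxMatching {M : Finset (Sym2 (Fin n))} (hM : IsMaxMatching G M)
    {e : Sym2 (Fin n)} (he : e ∈ M) : ∃ u ∈ N, ∃ x ∉ N, e = s(u, x) := by
  obtain ⟨a, b, rfl, hab⟩ := hM.1.1 e he
  by_cases ha : a ∈ N
  · refine ⟨a, ha, b, fun hb => ?_, rfl⟩
    -- every other edge of `M` needs its own vertex of `N \ {a, b}`, so `M` would be too small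
    have hle := (hM.1.subset (M.erase_subset s(a, b))).card_le
      (T := (N.erase a).erase b) fun e he' => by
        obtain ⟨v, hv, hve⟩ := hN.exists_mem_of_isEdge (hM.1.1 e (mem_of_mem_erase he'))
        have hv' := hM.1.2 e (mem_of_mem_erase he') s(a, b) he
          (ne_of_mem_erase he') v hve
        simp only [Sym2.mem_iff, not_or] at hv'
        exact ⟨v, by simp [hv, hv'.1, hv'.2], hve⟩
    have hcard := hN.card_eq_of_isMaxMatching hM
    rw [card_erase_of_mem he, card_erase_of_mem (by simp [hb, hab.1.symm]),
      card_erase_of_mem ha] at hle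
    have : 1 < N.card := one_lt_card.2 ⟨a, ha, b, hb, hab.1⟩
    omega
  · exact ⟨b, hN.mem_of_adjd ha hab, a, ha, Sym2.eq_swap⟩

lemma exists_mem_leafChoices_eq_of_isMaxMatching {M : Finset (Sym2 (Fin n))}
    (hM : IsMaxMatching G M) : ∃ f ∈ leafChoices G N, M = matchingOf N f := by
  have hcover : ∀ u ∈ N, ∃ x ∉ N, s(u, x) ∈ M := by
    intro u hu
    by_contra! h
    have hle := hM.1.card_le (T := N.erase u) fun e he => by
      obtain ⟨v, hv, x, hx, rfl⟩ := hN.exists_eq_mk_of_isMaxMatching hM he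
      exact ⟨v, mem_erase.2 ⟨by rintro rfl; exact h x hx he, hv⟩, Sym2.mem_mk_left v x⟩
    rw [card_erase_of_mem hu, hN.card_eq_of_isMaxMatching hM] at hle
    have := card_pos.2 ⟨u, hu⟩
    omega
  choose! g hgN hgM using hcover
  have hf : (fun u => if u ∈ N then g u else u) ∈ leafChoices G N :=
    mem_leafChoices.2 ⟨fun u hu => by simpa [hu] using ⟨hgN u hu, (hM.1.1 _ (hgM u hu)).adjd⟩,
      fun u hu => by simp [hu]⟩
  refine ⟨_, hf, (eq_of_subset_of_card_le ?_ ?_).symm⟩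
  · simp only [matchingOf, image_subset_iff]
    intro u hu
    simpa [hu] using hgM u hu
  · rw [card_matchingOf hf, hN.card_eq_of_isMaxMatching hM]

lemma mem_iff_notMem_of_mk_mem {M : Finset (Sym2 (Fin n))} (hM : IsMaxMatching G M)
    {a b : Fin n} (h : s(a, b) ∈ M) : a ∈ N ↔ b ∉ N := by
  obtain ⟨u, hu, x, hx, he⟩ := hN.exists_eq_mk_of_isMaxMatching hM h
  rcases Sym2.eq_iff.1 he with ⟨rfl, rfl⟩ | ⟨rfl, rfl⟩ <;> simp [hu, hx]

end IsSupportSet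

lemma exists_isSupportSet (hD : InClassD G) (hSC : StronglyConnected G) :
    ∃ N, IsSupportSet G N := by
  classical
  by_cases hpp : ∃ p q, Pendant G p ∧ Pendant G q ∧ Adjd G p q
  · obtain ⟨p, q, hp, hq, hpq⟩ := hpp
    -- two adjacent leaves form a whole component, hence the whole digraph
    have hvert : ∀ v, v = p ∨ v = q := fun v => by
      induction hSC p v with
      | refl => exact .inl rfl
      | tail _ hbc ih =>
        have hadj : Adjd G _ _ := ⟨fun h => hD.1.1 _ (h ▸ hbc), hbc, hD.1.2 _ _ hbc⟩
        rcases ih with rfl | rfl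
        exacts [.inr (hp.unique hadj hpq), .inl (hq.unique hadj hpq.symm)]
    refine ⟨{p}, fun x hx => ?_, fun x hx y hy => ?_, fun u hu => ?_⟩
    · rcases hvert x with rfl | rfl
      exacts [absurd (mem_singleton_self x) hx, hq]
    · rcases hvert x with rfl | rfl
      · exact absurd (mem_singleton_self x) hx
      rcases hvert y with rfl | rfl
      · exact absurd (mem_singleton_self y) hy
      exact fun h => h.1 rfl
    · rw [mem_singleton.1 hu]
      exact ⟨q, by simpa using hpq.1.symm, hpq⟩
  · push Not at hpp
    refine ⟨univ.filter fun u => ¬ Pendant G u, fun x hx => by simpa using hx,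
      fun x hx y hy => hpp x y (by simpa using hx) (by simpa using hy), fun u hu => ?_⟩
    obtain ⟨x, hux, hx⟩ := hD.2 u (by simpa using hu)
    exact ⟨x, by simpa using hx, hux⟩

end SupportSet

section Chains

variable {n : ℕ} {G : Fin n → Fin n → Prop} {M : Finset (Sym2 (Fin n))}

lemma isCycleChain_iff {c : List (Fin n)} :
    IsCycleChain G c ↔ c.Nodup ∧ 2 ≤ c.length ∧ c.IsChain (Adjd G) := Iff.rfl

lemma isAltChain_pair_iff {a b : Fin n} : IsAltChain M [a, b] ↔ s(a, b) ∈ M := by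
  simp [IsAltChain, chainEdges]

lemma isAltChain_four_iff {a b x y : Fin n} :
    IsAltChain M [a, b, x, y] ↔ s(a, b) ∈ M ∧ s(b, x) ∉ M ∧ s(x, y) ∈ M := by
  refine ⟨fun h => ⟨(h.2 0 (by simp [chainEdges])).2 (by decide),
    fun hbx => by simpa using (h.2 1 (by simp [chainEdges])).1 hbx,
    (h.2 2 (by simp [chainEdges])).2 (by decide)⟩, fun h => ⟨⟨1, rfl⟩, fun k hk => ?_⟩⟩
  have hk : k < 3 := hk
  interval_cases k <;> simp [chainEdges, h]

lemma isCycleChainBtw_pair {a b : Fin n} (h : Adjd G a b) : IsCycleChainBtw G a b [a, b] :=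
  ⟨by simp [isCycleChain_iff, List.isChain_cons_cons, h, h.1], rfl, rfl⟩

lemma isCycleChainBtw_four {a b x y : Fin n} (hab : Adjd G a b) (hbx : Adjd G b x)
    (hxy : Adjd G x y) (hay : a ≠ y) (hax : a ≠ x) (hby : b ≠ y) :
    IsCycleChainBtw G a y [a, b, x, y] :=
  ⟨by simp [isCycleChain_iff, List.isChain_cons_cons, *, hab.1, hbx.1, hxy.1], rfl, rfl⟩

lemma mk_mem_chainEdges_four_iff {N : Finset (Fin n)} {j u w k v x : Fin n} (hu : u ∈ N)
    (hw : w ∈ N) (hx : x ∉ N) :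
    s(v, x) ∈ chainEdges [j, u, w, k] ↔ v = u ∧ x = j ∨ v = w ∧ x = k := by
  simp only [chainEdges, List.tail_cons, List.zipWith_cons_cons, List.zipWith_nil_right,
    List.mem_cons, List.not_mem_nil, or_false, Sym2.eq_iff]
  grind

lemma not_pendant_of_adjd {v u w : Fin n} (hu : Adjd G v u) (hw : Adjd G v w) (huw : u ≠ w) :
    ¬ Pendant G v :=
  fun h => huw (h.unique hu hw)

end Chains

namespace IsSupportSet

variable {n : ℕ} {G : Fin n → Fin n → Prop} {N : Finset (Fin n)} {M : Finset (Sym2 (Fin n))}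

/-- Every edge of a maximum matching has a leaf end, while leaves can only be ends of a cycle
chain; so an alternating chain has at most two edges in `M`. -/
lemma altChain_cases (hN : IsSupportSet G N) (hM : IsMaxMatching G M) {i j : Fin n}
    {c : List (Fin n)} (hc : IsCycleChainBtw G i j c) (halt : IsAltChain M c) :
    (c = [i, j] ∧ Adjd G i j ∧ s(i, j) ∈ M) ∨
      ∃ b x, c = [i, b, x, j] ∧ i ∉ N ∧ j ∉ N ∧ Adjd G i b ∧ Adjd G b x ∧ Adjd G x j := by
  obtain ⟨hc, hi, hj⟩ := hc
  obtain ⟨hnd, hlen, hch⟩ := isCycleChain_iff.1 hc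
  match c, hi, hj, hnd, hlen, hch, halt with
  | [], _, _, _, hlen, _, _ | [_], _, _, _, hlen, _, _ => simp at hlen
  | [a, b], hi, hj, _, _, hch, halt =>
    have hai : a = i := by simpa using hi
    have hbj : b = j := by simpa using hj
    subst hai hbj
    simp only [List.isChain_cons_cons, List.IsChain.singleton, and_true] at hch
    exact .inl ⟨rfl, hch, isAltChain_pair_iff.1 halt⟩
  | [_, _, _], _, _, _, _, _, halt => exact absurd halt.1 (by decide : ¬ Odd 2)
  | [a, b, x, y], hi, hj, hnd, _, hch, halt =>
    have hai : a = i := by simpa using hi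
    have hyj : y = j := by simpa using hj
    subst hai hyj
    simp only [List.isChain_cons_cons, List.IsChain.singleton, and_true] at hch
    obtain ⟨hab, hbx, hxy⟩ := hch
    have hax : a ≠ x := by rintro rfl; simp at hnd
    have hby : b ≠ y := by rintro rfl; simp at hnd
    obtain ⟨h1, -, h3⟩ := isAltChain_four_iff.1 halt
    refine .inr ⟨b, x, rfl, fun ha => ?_, fun hy => ?_, hab, hbx, hxy⟩
    · exact not_pendant_of_adjd hab.symm hbx hax
        (hN.pendant b ((hN.mem_iff_notMem_of_mk_mem hM h1).1 ha))
    · exact not_pendant_of_adjd hbx.symm hxy hby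
        (hN.pendant x fun hx => (hN.mem_iff_notMem_of_mk_mem hM h3).1 hx hy)
  | _ :: b :: x :: y :: z :: _, _, _, hnd, _, hch, halt =>
    simp only [List.isChain_cons_cons] at hch
    obtain ⟨-, hbx, hxy, hyz, -⟩ := hch
    have hby : b ≠ y := by rintro rfl; simp at hnd
    have hxz : x ≠ z := by rintro rfl; simp at hnd
    have h2 : s(x, y) ∈ M := (halt.2 2 (by simp [chainEdges])).2 (by decide)
    by_cases hx : x ∈ N
    · exact absurd (hN.pendant y ((hN.mem_iff_notMem_of_mk_mem hM h2).1 hx))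
        (not_pendant_of_adjd hxy.symm hyz hxz)
    · exact absurd (hN.pendant x hx) (not_pendant_of_adjd hbx.symm hxy hby)

end IsSupportSet

section Mu

open scoped Classical

variable {n : ℕ} {A : Matrix (Fin n) (Fin n) ℝ} {N : Finset (Fin n)} {f : Fin n → Fin n}

lemma mu_eq_zero_of_not_maxMatchable {i j : Fin n} (h : ¬ MaxMatchable A i j) :
    mu A i j = 0 := by
  rw [mu, beta, if_neg h, zero_mul]

lemma mu_eq_of_forall_isAltChain_eq {i j : Fin n} {c : List (Fin n)}
    (hc : IsCycleChainBtw (DA A) i j c)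
    (huniq : ∀ M c', IsMaxMatching (DA A) M → IsCycleChainBtw (DA A) i j c' →
      IsAltChain M c' → c' = c) :
    mu A i j = (-1) ^ ((c.length - 2) / 2) * pathProd A c *
      ∑ M ∈ (maxMatchings A).filter (IsAltChain · c),
        ∏ e ∈ M.filter (· ∉ chainEdges c), cycProd A e := by
  have hMM : (MMset A i j).toFinite.toFinset = (maxMatchings A).filter (IsAltChain · c) := by
    ext M
    simp only [Set.Finite.mem_toFinset, MMset, maxMatchings, mem_filter, Set.mem_ofPred_eq]
    exact ⟨fun ⟨hM, c', hc', halt⟩ => ⟨hM, huniq M c' hM hc' halt ▸ halt⟩,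
      fun ⟨hM, halt⟩ => ⟨hM, c, hc, halt⟩⟩
  by_cases hm : MaxMatchable A i j
  · have hex : ∃ c, IsCycleChainBtw (DA A) i j c ∧ ∃ M ∈ MMset A i j, IsAltChain M c := by
      obtain ⟨M, hM, c', hc', halt⟩ := hm
      exact ⟨c', hc', M, ⟨hM, c', hc', halt⟩, halt⟩
    have hchain : theChain A i j = c := by
      obtain ⟨hc', M, hM, halt⟩ := hex.choose_spec
      rw [theChain, dif_pos hex]
      exact huniq M _ hM.1 hc' halt
    simp only [mu, beta, betaBar, if_pos hm, hchain, hMM]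
  · rw [mu_eq_zero_of_not_maxMatchable hm, ← hMM, Set.not_nonempty_iff_eq_empty.1 hm]
    simp

lemma IsSupportSet.maxMatchings_eq_image (hN : IsSupportSet (DA A) N) :
    maxMatchings A = (leafChoices (DA A) N).image (matchingOf N) := by
  ext M
  simp only [maxMatchings, Set.Finite.mem_toFinset, Set.mem_ofPred_eq, mem_image]
  refine ⟨fun hM => ?_, fun ⟨f, hf, hfM⟩ => hfM ▸ hN.isMaxMatching_matchingOf hf⟩
  obtain ⟨f, hf, rfl⟩ := hN.exists_mem_leafChoices_eq_of_isMaxMatching hM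
  exact ⟨f, hf, rfl⟩

lemma prod_cycProd_matchingOf {s : Finset (Fin n)} (hs : s ⊆ N) (hf : ∀ u ∈ N, f u ∉ N) :
    ∏ e ∈ matchingOf s f, cycProd A e = ∏ u ∈ s, A u (f u) * A (f u) u :=
  prod_image ((injOn_mk_of_forall_notMem hf).mono hs)

lemma filter_matchingOf_notMem {E : List (Sym2 (Fin n))} {K : Finset (Fin n)}
    (hE : ∀ u ∈ N, s(u, f u) ∈ E ↔ u ∈ K) :
    (matchingOf N f).filter (· ∉ E) = matchingOf (N \ K) f := by
  ext e
  simp only [matchingOf, mem_filter, mem_image, mem_sdiff]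
  constructor
  · rintro ⟨⟨u, hu, rfl⟩, he⟩
    exact ⟨u, ⟨hu, fun hK => he ((hE u hu).2 hK)⟩, rfl⟩
  · rintro ⟨u, ⟨hu, hK⟩, rfl⟩
    exact ⟨⟨u, hu, rfl⟩, fun h => hK ((hE u hu).1 h)⟩

lemma sum_filter_adjd_eq_leafSum {u : Fin n} (hu : u ∈ N) :
    ∑ x ∈ Nᶜ.filter (Adjd (DA A) u), A u x * A x u = leafSum A N u := by
  refine sum_filter_of_ne fun x hx hux => ⟨?_, left_ne_zero_of_mul hux, right_ne_zero_of_mul hux⟩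
  rintro rfl
  exact mem_compl.1 hx hu

lemma sum_filter_leafChoices_prod {K : Finset (Fin n)} {g : Fin n → Fin n}
    (hg : ∀ u ∈ K, g u ∉ N ∧ Adjd (DA A) u (g u)) (hK : K ⊆ N) :
    ∑ f ∈ (leafChoices (DA A) N).filter (fun f => ∀ u ∈ K, f u = g u),
      ∏ u ∈ N \ K, A u (f u) * A (f u) u = ∏ u ∈ N \ K, leafSum A N u := by
  rw [leafChoices, Fintype.filter_piFinset_forall_eq fun u hu => by simpa [hK hu] using hg u hu,
    sum_piFinset_prod_of_card_eq_one (w := fun u x => A u x * A x u)]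
  · refine prod_congr rfl fun u hu => ?_
    rw [mem_sdiff] at hu
    simp only [if_neg hu.2, if_pos hu.1]
    exact sum_filter_adjd_eq_leafSum hu.1
  · intro u hu
    by_cases huK : u ∈ K
    · simp [huK]
    · simp [huK, show u ∉ N from fun h => hu (mem_sdiff.2 ⟨h, huK⟩)]

lemma IsSupportSet.Delta_eq_prod_leafSum (hN : IsSupportSet (DA A) N) :
    Delta A = ∏ u ∈ N, leafSum A N u := by
  have h := sum_filter_leafChoices_prod (A := A) (N := N) (K := ∅) (g := id) (by simp)
    (empty_subset _)
  simp only [sdiff_empty, notMem_empty, IsEmpty.forall_iff, implies_true, filter_true_of_mem] at h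
  rw [Delta, hN.maxMatchings_eq_image, sum_image injOn_matchingOf, ← h]
  exact sum_congr rfl fun f hf => prod_cycProd_matchingOf subset_rfl
    fun u hu => ((mem_leafChoices.1 hf).1 u hu).1

namespace IsSupportSet

variable (hN : IsSupportSet (DA A) N)
include hN

lemma sum_filter_isAltChain {c : List (Fin n)} {K : Finset (Fin n)} {g : Fin n → Fin n}
    (hg : ∀ u ∈ K, g u ∉ N ∧ Adjd (DA A) u (g u)) (hK : K ⊆ N)
    (halt : ∀ f ∈ leafChoices (DA A) N, IsAltChain (matchingOf N f) c ↔ ∀ u ∈ K, f u = g u)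
    (hedge : ∀ f ∈ leafChoices (DA A) N, (∀ u ∈ K, f u = g u) →
      ∀ u ∈ N, s(u, f u) ∈ chainEdges c ↔ u ∈ K) :
    ∑ M ∈ (maxMatchings A).filter (IsAltChain · c),
      ∏ e ∈ M.filter (· ∉ chainEdges c), cycProd A e = ∏ u ∈ N \ K, leafSum A N u := by
  rw [hN.maxMatchings_eq_image, filter_image,
    sum_image (injOn_matchingOf.mono (coe_subset.2 (filter_subset _ _))),
    ← sum_filter_leafChoices_prod hg hK, filter_congr halt]
  refine sum_congr rfl fun f hf => ?_
  obtain ⟨hfl, hpin⟩ := mem_filter.1 hf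
  rw [filter_matchingOf_notMem (hedge f hfl hpin), prod_cycProd_matchingOf sdiff_subset
    fun u hu => ((mem_leafChoices.1 hfl).1 u hu).1]

lemma mu_eq_mul_prod_erase {u p x y : Fin n} (hu : u ∈ N) (hp : p ∉ N) (hup : Adjd (DA A) u p)
    (hxy : s(x, y) = s(u, p)) :
    mu A x y = A x y * ∏ v ∈ N.erase u, leafSum A N v := by
  have hadj : Adjd (DA A) x y := by
    rcases Sym2.eq_iff.1 hxy with ⟨rfl, rfl⟩ | ⟨rfl, rfl⟩
    exacts [hup, hup.symm]
  have hxyN : x ∈ N ∨ y ∈ N := by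
    rcases Sym2.eq_iff.1 hxy with ⟨rfl, rfl⟩ | ⟨rfl, rfl⟩
    exacts [.inl hu, .inr hu]
  rw [mu_eq_of_forall_isAltChain_eq (isCycleChainBtw_pair hadj), ← sdiff_singleton_eq_erase,
    hN.sum_filter_isAltChain (K := {u}) (g := fun _ => p) (by simpa using ⟨hp, hup⟩)
      (singleton_subset_iff.2 hu)]
  · simp [pathProd]
  · intro f _
    rw [isAltChain_pair_iff, hxy, mk_mem_matchingOf_iff hp]
    simp [hu]
  · intro f _ hfu v hv
    simp only [chainEdges, List.tail_cons, List.zipWith_cons_cons, List.zipWith_nil_right,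
      List.mem_singleton, hxy, mem_singleton]
    refine ⟨fun h => ?_, fun h => by rw [h, hfu u (mem_singleton_self u)]⟩
    rcases Sym2.eq_iff.1 h with ⟨rfl, -⟩ | ⟨rfl, -⟩
    exacts [rfl, absurd hv hp]
  · intro M c hM hc halt
    rcases hN.altChain_cases hM hc halt with ⟨rfl, -⟩ | ⟨b, z, -, hx, hy, -⟩
    · rfl
    · exact absurd hxyN (by simp [hx, hy])

lemma mu_eq_neg_mul_prod_sdiff {j u w k : Fin n} (hj : j ∉ N) (hk : k ∉ N) (hju : Adjd (DA A) j u)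
    (huw : Adjd (DA A) u w) (hwk : Adjd (DA A) w k) :
    mu A j k = -(A j u * A u w * A w k) * ∏ v ∈ N \ {u, w}, leafSum A N v := by
  have hu : u ∈ N := hN.mem_of_adjd hj hju
  have hw : w ∈ N := hN.mem_of_adjd hk hwk.symm
  have hjk : j ≠ k := by rintro rfl; exact huw.1 ((hN.pendant j hj).unique hju hwk.symm)
  have hjw : j ≠ w := by rintro rfl; exact hj hw
  have huk : u ≠ k := by rintro rfl; exact hk hu
  rw [mu_eq_of_forall_isAltChain_eq (isCycleChainBtw_four hju huw hwk hjk hjw huk),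
    hN.sum_filter_isAltChain (K := {u, w}) (g := fun v => if v = u then j else k)]
  · rw [show ([j, u, w, k].length - 2) / 2 = 1 by simp]
    simp only [pathProd, List.tail_cons, List.zipWith_cons_cons, List.zipWith_nil_right,
      List.prod_cons, List.prod_nil]
    ring
  · simp [hj, hk, huw.1.symm, hju.symm, hwk]
  · simp [insert_subset_iff, hu, hw]
  · intro f hf
    have hfN := fun v hv => ((mem_leafChoices.1 hf).1 v hv).1
    rw [isAltChain_four_iff, Sym2.eq_swap, mk_mem_matchingOf_iff hj,
      mk_mem_matchingOf_iff hk]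
    simp [mk_notMem_matchingOf hfN hu hw, hu, hw, huw.1.symm]
  · intro f hf hpin v hv
    have hfu : f u = j := by simpa using hpin u (by simp)
    have hfw : f w = k := by simpa [huw.1.symm] using hpin w (by simp)
    rw [mk_mem_chainEdges_four_iff hu hw ((mem_leafChoices.1 hf).1 v hv).1, mem_insert,
      mem_singleton]
    grind
  · intro M c hM hc halt
    rcases hN.altChain_cases hM hc halt with ⟨-, -, hjkM⟩ | ⟨b, x, rfl, -, -, hjb, -, hxk⟩
    · exact absurd hk ((hN.mem_iff_notMem_of_mk_mem hM hjkM).not.1 hj)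
    · rw [(hN.pendant j hj).unique hjb hju, (hN.pendant k hk).unique hxk.symm hwk.symm]

lemma maxMatchable_cases {j k : Fin n} (h : MaxMatchable A j k) :
    (Adjd (DA A) j k ∧ (j ∈ N ↔ k ∉ N)) ∨
      (j ∉ N ∧ k ∉ N ∧ ∃ u w, Adjd (DA A) j u ∧ Adjd (DA A) u w ∧ Adjd (DA A) w k) := by
  obtain ⟨M, hM, c, hc, halt⟩ := h
  rcases hN.altChain_cases hM hc halt with ⟨-, hjk, hjkM⟩ | ⟨b, x, -, hj, hk, hjb, hbx, hxk⟩
  exacts [.inl ⟨hjk, hN.mem_iff_notMem_of_mk_mem hM hjkM⟩, .inr ⟨hj, hk, b, x, hjb, hbx, hxk⟩]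

lemma leafSum_ne_zero (hΔ : Delta A ≠ 0) {u : Fin n} (hu : u ∈ N) : leafSum A N u ≠ 0 :=
  prod_ne_zero_iff.1 (hN.Delta_eq_prod_leafSum ▸ hΔ) u hu

end IsSupportSet

end Mu

section Inverse

variable {n : ℕ} {A : Matrix (Fin n) (Fin n) ℝ} {N : Finset (Fin n)}

namespace IsSSD

variable (hA : IsSSD (DA A))
include hA

lemma adjd_of_apply_ne_zero {i j : Fin n} (h : A i j ≠ 0) : Adjd (DA A) i j :=
  ⟨fun hij => hA.1 i (hij ▸ h), h, hA.2 i j h⟩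

lemma apply_eq_zero_of_not_adjd {i j : Fin n} (h : ¬ Adjd (DA A) i j) : A i j = 0 :=
  not_not.1 fun hij => h (hA.adjd_of_apply_ne_zero hij)

lemma apply_eq_zero_of_pendant {x u v : Fin n} (hx : Pendant (DA A) x) (hxu : Adjd (DA A) x u)
    (hv : v ≠ u) : A x v = 0 ∧ A v x = 0 :=
  ⟨hA.apply_eq_zero_of_not_adjd fun h => hv (hx.unique h hxu),
    hA.apply_eq_zero_of_not_adjd fun h => hv (hx.unique h.symm hxu)⟩

end IsSSD

namespace IsSupportSet

variable (hA : IsSSD (DA A)) (hN : IsSupportSet (DA A) N)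
include hA hN

lemma apply_eq_zero {x y : Fin n} (hx : x ∉ N) (hy : y ∉ N) : A x y = 0 :=
  hA.apply_eq_zero_of_not_adjd (hN.not_adjd x hx y hy)

lemma apply_mul_apply_eq_zero {x u w : Fin n} (hx : x ∉ N) (huw : u ≠ w) :
    A u x * A x w = 0 := by
  obtain ⟨p, hxp, -⟩ := hN.pendant x hx
  rcases eq_or_ne u p with rfl | hu
  · rw [(hA.apply_eq_zero_of_pendant (hN.pendant x hx) hxp huw.symm).1, mul_zero]
  · rw [(hA.apply_eq_zero_of_pendant (hN.pendant x hx) hxp hu).2, zero_mul]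

lemma mu_eq_Delta_mul_supportInverse_of_mem (hΔ : Delta A ≠ 0) {j k : Fin n}
    (h : j ∈ N ∨ k ∈ N) : mu A j k = Delta A * supportInverse A N j k := by
  rw [supportInverse_apply_of_mem h, hN.Delta_eq_prod_leafSum]
  by_cases hj : j ∈ N <;> by_cases hk : k ∈ N
  · rw [mu_eq_zero_of_not_maxMatchable fun hm => ?_]
    · simp [leafLeftInv, leafRightInv, hj, hk]
    rcases hN.maxMatchable_cases hm with ⟨-, h⟩ | ⟨h, -⟩
    exacts [(h.1 hj) hk, h hj]
  · by_cases hadj : Adjd (DA A) j k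
    · rw [hN.mu_eq_mul_prod_erase hj hk hadj rfl, ← mul_prod_erase N _ hj]
      simp only [leafLeftInv, leafRightInv, of_apply, hj, hk, not_true_eq_false,
        not_false_eq_true, and_self, if_true, if_false, add_zero]
      field_simp [hN.leafSum_ne_zero hΔ hj]
    · rw [mu_eq_zero_of_not_maxMatchable fun hm => ?_]
      · simp [leafLeftInv, leafRightInv, hA.apply_eq_zero_of_not_adjd hadj]
      rcases hN.maxMatchable_cases hm with ⟨h, -⟩ | ⟨h, -⟩
      exacts [hadj h, h hj]
  · by_cases hadj : Adjd (DA A) j k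
    · rw [hN.mu_eq_mul_prod_erase hk hj hadj.symm Sym2.eq_swap, ← mul_prod_erase N _ hk]
      simp only [leafLeftInv, leafRightInv, of_apply, hj, hk, not_true_eq_false,
        not_false_eq_true, and_self, if_true, if_false, zero_add]
      field_simp [hN.leafSum_ne_zero hΔ hk]
    · rw [mu_eq_zero_of_not_maxMatchable fun hm => ?_]
      · simp [leafLeftInv, leafRightInv, hA.apply_eq_zero_of_not_adjd hadj]
      rcases hN.maxMatchable_cases hm with ⟨h, -⟩ | ⟨-, h, -⟩
      exacts [hadj h, h hk]
  · exact absurd h (by simp [hj, hk])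

lemma mu_eq_Delta_mul_supportInverse_of_notMem (hΔ : Delta A ≠ 0) {j k : Fin n} (hj : j ∉ N)
    (hk : k ∉ N) : mu A j k = Delta A * supportInverse A N j k := by
  obtain ⟨u, hju, -⟩ := hN.pendant j hj
  obtain ⟨w, hkw, -⟩ := hN.pendant k hk
  have hu := hN.mem_of_adjd hj hju
  have hw := hN.mem_of_adjd hk hkw
  have hentry : supportInverse A N j k =
      -(A j u / leafSum A N u * A u w * (A w k / leafSum A N w)) := by
    rw [supportInverse, Matrix.sub_apply, Matrix.add_apply,
      leafRightInv_mul_mul_leafLeftInv_apply hj hk hu hw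
        (fun v hv => (hA.apply_eq_zero_of_pendant (hN.pendant j hj) hju hv).1)
        (fun v hv => (hA.apply_eq_zero_of_pendant (hN.pendant k hk) hkw hv).2)]
    simp [leafLeftInv, leafRightInv, hj, hk]
  rw [hentry]
  by_cases hadj : Adjd (DA A) u w
  · rw [hN.mu_eq_neg_mul_prod_sdiff hj hk hju hadj hkw.symm, hN.Delta_eq_prod_leafSum,
      ← mul_prod_erase N _ hw, ← mul_prod_erase _ _ (mem_erase.2 ⟨hadj.1, hu⟩), sdiff_insert,
      sdiff_singleton_eq_erase]
    field_simp [hN.leafSum_ne_zero hΔ hu, hN.leafSum_ne_zero hΔ hw]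
  · rw [hA.apply_eq_zero_of_not_adjd hadj, mu_eq_zero_of_not_maxMatchable fun hm => ?_]
    · simp
    rcases hN.maxMatchable_cases hm with ⟨-, h⟩ | ⟨-, -, u', w', hju', hadj', hwk'⟩
    · exact hk (not_not.1 (h.not.1 hj))
    · rw [(hN.pendant j hj).unique hju' hju, (hN.pendant k hk).unique hwk'.symm hkw] at hadj'
      exact hadj hadj'

theorem mul_supportInverse_mul (hΔ : Delta A ≠ 0) : A * supportInverse A N * A = A :=
  _root_.mul_supportInverse_mul (fun _ hx _ hy => hN.apply_eq_zero hA hx hy)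
    (fun _ hx _ _ huw => hN.apply_mul_apply_eq_zero hA hx huw) fun _ => hN.leafSum_ne_zero hΔ

end IsSupportSet

end Inverse

/-- Lemma 2.9: with `B = (μ_{ij}/Δ_A)`, one has `ABA = A`. -/
theorem ABA_eq_A {n : ℕ} (A : Matrix (Fin n) (Fin n) ℝ)
    (hD : InClassD (DA A)) (hSC : StronglyConnected (DA A)) (hΔ : Delta A ≠ 0)
    (B : Matrix (Fin n) (Fin n) ℝ) (hB : ∀ i j, B i j = mu A i j / Delta A) :
    A * B * A = A := by
  obtain ⟨N, hN⟩ := exists_isSupportSet hD hSC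
  have hB' : B = supportInverse A N := by
    ext j k
    have hμ : mu A j k = Delta A * supportInverse A N j k := by
      by_cases h : j ∈ N ∨ k ∈ N
      · exact hN.mu_eq_Delta_mul_supportInverse_of_mem hD.1 hΔ h
      · push Not at h
        exact hN.mu_eq_Delta_mul_supportInverse_of_notMem hD.1 hΔ h.1 h.2
    rw [hB, hμ, mul_div_cancel_left₀ _ hΔ]
  rw [hB']
  exact hN.mul_supportInverse_mul hD.1 hΔ
end

section
/- Let A be an n×n real matrix with Δ_A ≠ 0 such that D(A) is a star tree digraph. Then D(A^#) is a star tree digraph. -/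
open Matrix

lemma vecMulVec_mul_vecMulVec' {n : ℕ} (a b c d : Fin n → ℝ) :
    vecMulVec a b * vecMulVec c d = (b ⬝ᵥ c) • vecMulVec a d := by
  ext i j
  simp only [Matrix.mul_apply, Matrix.vecMulVec_apply, Matrix.smul_apply, dotProduct,
    smul_eq_mul, Finset.sum_mul]
  apply Finset.sum_congr rfl
  intro k _
  ring

lemma cycProd_mk {n : ℕ} (A : Matrix (Fin n) (Fin n) ℝ) (i j : Fin n) :
    cycProd A s(i, j) = A i j * A j i := rfl

/-- Proposition 3.5(i): if `Δ_A ≠ 0` and `D(A)` is a star tree digraph, then `D(A^#)` is a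
star tree digraph. -/
theorem star_tree_group_inverse {n : ℕ} (A : Matrix (Fin n) (Fin n) ℝ)
    (hΔ : Delta A ≠ 0) (hstar : IsStarTree (DA A)) :
    ∀ X, IsGroupInverse A X → IsStarTree (DA X) := by
  classical
  obtain ⟨htree, c, hc1, hc2⟩ := hstar
  intro X hX
  -- no loops
  have hdiag : ∀ i, A i i = 0 := by
    intro i
    by_contra h
    have := htree.2 i [] (by simp) List.Chain.nil (by simpa [DA] using h)
    simp at this
  -- zero entries away from the center
  have hz : ∀ i j, i ≠ c → j ≠ c → A i j = 0 := by
    intro i j hi hj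
    by_cases hij : i = j
    · rw [hij]; exact hdiag j
    by_contra h
    have hjc : DA A j c := (hc1 j hj).2.2
    have hci : DA A c i := (hc1 i hi).2.1
    have := htree.2 i [j, c] (by simp [hij, hi, hj])
      (List.Chain.cons h (List.Chain.cons hjc List.Chain.nil)) hci
    simp at this
  by_cases hex : ∃ j : Fin n, j ≠ c
  · obtain ⟨j₀, hj₀⟩ := hex
    set s : ℝ := ∑ k, A c k * A k c with hs_def
    -- every edge of D(A) is s(c, j) with j ≠ c
    have hedgec : ∀ e, IsEdge (DA A) e → ∃ j, j ≠ c ∧ e = s(c, j) := by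
      rintro e ⟨i, j, rfl, hne, hij, hji⟩
      rcases hc2 i j ⟨hne, hij, hji⟩ with h | h
      · exact ⟨j, fun hjc => hne (by rw [h, hjc]), by rw [h]⟩
      · exact ⟨i, fun hic => hne (by rw [h, hic]), by rw [h]; exact Sym2.eq_swap⟩
    have hcmem : ∀ (j : Fin n), c ∈ s(c, j) := fun j => Sym2.mem_mk_left c j
    have hcard : ∀ M, IsMatching (DA A) M → M.card ≤ 1 := by
      intro M hM
      by_contra h
      push_neg at h
      obtain ⟨e, he, f, hf, hef⟩ := Finset.one_lt_card.mp h
      obtain ⟨j, hj, rfl⟩ := hedgec e (hM.1 e he)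
      obtain ⟨j', hj', rfl⟩ := hedgec f (hM.1 f hf)
      exact hM.2 _ he _ hf hef c (hcmem j) (hcmem j')
    have hsingle : ∀ j, j ≠ c → IsMatching (DA A) {s(c, j)} := by
      intro j hj
      constructor
      · intro e he
        rw [Finset.mem_singleton] at he
        exact ⟨c, j, he, (hc1 j hj).1, (hc1 j hj).2.1, (hc1 j hj).2.2⟩
      · intro e he f hf hef
        rw [Finset.mem_singleton] at he hf
        exact absurd (he.trans hf.symm) hef
    have hmaxiff : ∀ M, IsMaxMatching (DA A) M ↔ ∃ j, j ≠ c ∧ M = {s(c, j)} := by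
      intro M
      constructor
      · rintro ⟨hM, hmax⟩
        have h1 : 1 ≤ M.card := by simpa using hmax {s(c, j₀)} (hsingle j₀ hj₀)
        obtain ⟨e, rfl⟩ := Finset.card_eq_one.mp (le_antisymm (hcard M hM) h1)
        obtain ⟨j, hj, rfl⟩ := hedgec e (hM.1 e (Finset.mem_singleton_self e))
        exact ⟨j, hj, rfl⟩
      · rintro ⟨j, hj, rfl⟩
        exact ⟨hsingle j hj, fun M' hM' => by simpa using hcard M' hM'⟩
    have hmax_eq : maxMatchings A =
        (Finset.univ.erase c).image (fun j => ({s(c, j)} : Finset (Sym2 (Fin n)))) := by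
      ext M
      simp only [maxMatchings, Set.Finite.mem_toFinset, Set.mem_setOf_eq, hmaxiff,
        Finset.mem_image, Finset.mem_erase, Finset.mem_univ, and_true]
      constructor
      · rintro ⟨j, hj, rfl⟩; exact ⟨j, hj, rfl⟩
      · rintro ⟨j, hj, rfl⟩; exact ⟨j, hj, rfl⟩
    have hDelta : Delta A = s := by
      have hinj : ∀ j ∈ Finset.univ.erase c, ∀ j' ∈ Finset.univ.erase c,
          ({s(c, j)} : Finset (Sym2 (Fin n))) = {s(c, j')} → j = j' := by
        intro j hj j' hj' hss
        have h2 : s(c, j) = s(c, j') := Finset.singleton_injective hss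
        rcases Sym2.eq_iff.mp h2 with ⟨_, h⟩ | ⟨h, _⟩
        · exact h
        · exact absurd h.symm (Finset.mem_erase.mp hj').1
      rw [Delta, hmax_eq, Finset.sum_image hinj]
      rw [hs_def, ← Finset.sum_erase (a := c) Finset.univ (by simp [hdiag c])]
      apply Finset.sum_congr rfl
      intro j _
      rw [matchProd, Finset.prod_singleton, cycProd_mk]
    have hs_ne : s ≠ 0 := hDelta ▸ hΔ
    -- decompose A
    set ec : Fin n → ℝ := fun i => if i = c then 1 else 0 with hec_def
    set u : Fin n → ℝ := fun j => A c j with hu_def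
    set v : Fin n → ℝ := fun i => A i c with hv_def
    have hdot_e_right : ∀ x : Fin n → ℝ, x ⬝ᵥ ec = x c := by
      intro x; simp [dotProduct, hec_def]
    have hdot_e_left : ∀ x : Fin n → ℝ, ec ⬝ᵥ x = x c := by
      intro x; simp [dotProduct, hec_def]
    have huc : u c = 0 := hdiag c
    have hvc : v c = 0 := hdiag c
    have huv : u ⬝ᵥ v = s := rfl
    have hecc : ec c = 1 := by simp [hec_def]
    have hAdec : A = vecMulVec ec u + vecMulVec v ec := by
      ext i j
      simp only [Matrix.add_apply, Matrix.vecMulVec_apply, hec_def, hu_def, hv_def]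
      by_cases hi : i = c <;> by_cases hj : j = c
      · simp [hi, hj, hdiag c]
      · simp [hi, hj, hdiag c]
      · simp [hi, hj, hdiag c]
      · simp [hi, hj, hz i j hi hj]
    -- A³ = s • A
    have hA3 : A * A * A = s • A := by
      rw [hAdec]
      simp only [add_mul, mul_add, vecMulVec_mul_vecMulVec', hdot_e_right, hdot_e_left,
        huc, hvc, huv, hecc, Matrix.smul_mul, Matrix.mul_smul, zero_smul, smul_zero,
        add_zero, zero_add, one_smul, smul_smul, zero_mul, mul_zero, mul_one, one_mul,
        smul_add]
    obtain ⟨h1, h2, h3⟩ := hX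
    -- A = A * A * X
    have hA2X : A = A * A * X := by
      conv_lhs => rw [← h1]
      rw [Matrix.mul_assoc, ← h3, ← Matrix.mul_assoc]
    have hAX : A * X = s⁻¹ • (A * A) := by
      have h4 : A * A = s • (A * X) := by
        calc A * A = A * (A * A * X) := by rw [← hA2X]
        _ = (A * A * A) * X := by rw [← Matrix.mul_assoc, ← Matrix.mul_assoc]
        _ = (s • A) * X := by rw [hA3]
        _ = s • (A * X) := by rw [Matrix.smul_mul]
      rw [h4, smul_smul, inv_mul_cancel₀ hs_ne, one_smul]
    have hXeq : X = s⁻¹ • A := by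
      calc X = X * A * X := h2.symm
      _ = X * (A * X) := by rw [Matrix.mul_assoc]
      _ = s⁻¹ • (X * (A * A)) := by rw [hAX, Matrix.mul_smul]
      _ = s⁻¹ • ((X * A) * A) := by rw [Matrix.mul_assoc]
      _ = s⁻¹ • ((A * X) * A) := by rw [h3]
      _ = s⁻¹ • ((s⁻¹ • (A * A)) * A) := by rw [hAX]
      _ = (s⁻¹ * s⁻¹) • (A * A * A) := by rw [Matrix.smul_mul, smul_smul]
      _ = (s⁻¹ * s⁻¹) • (s • A) := by rw [hA3]
      _ = ((s⁻¹ * s⁻¹) * s) • A := by rw [smul_smul]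
      _ = s⁻¹ • A := by rw [mul_assoc, inv_mul_cancel₀ hs_ne, mul_one]
    have hDAX : DA X = DA A := by
      funext i j
      rw [eq_iff_iff]
      simp [DA, hXeq, Matrix.smul_apply, smul_eq_mul, mul_ne_zero_iff, inv_ne_zero hs_ne]
    rw [hDAX]
    exact ⟨htree, c, hc1, hc2⟩
  · -- degenerate case: every vertex equals the center, so A = 0 and X = 0
    push_neg at hex
    have hA0 : A = 0 := by
      ext i j
      rw [hex i, hex j]
      simpa using hdiag c
    have hX0 : X = 0 := by
      have h := hX.2.1
      rw [hA0] at h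
      rw [← h, Matrix.mul_zero, Matrix.zero_mul]
    rw [hX0]
    refine ⟨⟨?_, ?_⟩, c, ?_, ?_⟩
    · intro i j
      rw [show i = j from (hex i).trans (hex j).symm]
    · intro a l _ _ hlast
      exact absurd hlast (by simp [DA])
    · intro j hj
      exact absurd (hex j) hj
    · intro i j hadj
      exact absurd hadj.2.1 (by simp [DA])
end

section
/- Let A be an n×n real matrix with Δ_A ≠ 0 such that D(A) is a corona digraph. Then D(A^#) is a corona digraph. -/
open Matrix

/-- A corona digraph pulled back along an involution is a corona digraph. -/
lemma isCorona_comp {n : ℕ} {G : Fin n → Fin n → Prop} (m : Fin n → Fin n)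
    (hm : ∀ i, m (m i) = i) (h : IsCorona G) :
    IsCorona (fun i j => G (m i) (m j)) := by
  obtain ⟨⟨hloop, hsymm⟩, hcor⟩ := h
  have hinj : Function.Injective m := Function.LeftInverse.injective hm
  have hadj : ∀ i j, Adjd (fun i j => G (m i) (m j)) i j ↔ Adjd G (m i) (m j) := by
    intro i j
    constructor
    · rintro ⟨h1, h2, h3⟩; exact ⟨fun e => h1 (hinj e), h2, h3⟩
    · rintro ⟨h1, h2, h3⟩; exact ⟨fun e => h1 (by rw [e]), h2, h3⟩
  have hpend : ∀ i, Pendant (fun i j => G (m i) (m j)) i ↔ Pendant G (m i) := by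
    intro i
    constructor
    · rintro ⟨j, hj, hu⟩
      refine ⟨m j, (hadj i j).1 hj, fun y hy => ?_⟩
      have h1 : Adjd (fun i j => G (m i) (m j)) i (m y) := by
        apply (hadj i (m y)).2
        rw [hm]; exact hy
      have := hu (m y) h1
      rw [← this, hm]
    · rintro ⟨j, hj, hu⟩
      refine ⟨m j, (hadj i (m j)).2 (by rw [hm]; exact hj), fun y hy => ?_⟩
      have := hu (m y) ((hadj i y).1 hy)
      rw [← this, hm]
  constructor
  · exact ⟨fun i => hloop (m i), fun i j h => hsymm _ _ h⟩
  · intro i hi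
    rw [hpend] at hi
    obtain ⟨j, ⟨hj1, hj2⟩, hu⟩ := hcor (m i) hi
    refine ⟨m j, ⟨(hadj i (m j)).2 (by rw [hm]; exact hj1), (hpend (m j)).2 (by rw [hm]; exact hj2)⟩,
      fun y ⟨hy1, hy2⟩ => ?_⟩
    have := hu (m y) ⟨(hadj i y).1 hy1, (hpend y).1 hy2⟩
    rw [← this, hm]
/-- Proposition 3.5(ii): if `Δ_A ≠ 0` and `D(A)` is a corona digraph, then `D(A^#)` is a
corona digraph. -/
theorem corona_group_inverse {n : ℕ} (A : Matrix (Fin n) (Fin n) ℝ)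
    (hΔ : Delta A ≠ 0) (hcor : IsCorona (DA A)) :
    ∀ X, IsGroupInverse A X → IsCorona (DA X) := by
  intro X hX
  obtain ⟨⟨hloop, hsymm⟩, hcorP⟩ := hcor
  have hdiag : ∀ i, A i i = 0 := fun i => not_not.1 (hloop i)
  -- partner function
  have hpart : ∀ i : Fin n, ∃ j, Adjd (DA A) i j ∧
      (Pendant (DA A) i → ∀ y, Adjd (DA A) i y → y = j) ∧
      (¬ Pendant (DA A) i → Pendant (DA A) j ∧
        ∀ y, Adjd (DA A) i y → Pendant (DA A) y → y = j) := by
    intro i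
    by_cases hp : Pendant (DA A) i
    · obtain ⟨j, hj, hu⟩ := id hp
      exact ⟨j, hj, fun _ y hy => hu y hy, fun h => absurd hp h⟩
    · obtain ⟨j, ⟨hj, hjp⟩, hu⟩ := hcorP i hp
      exact ⟨j, hj, fun h => absurd h hp, fun _ => ⟨hjp, fun y hy hyp => hu y ⟨hy, hyp⟩⟩⟩
  choose m hm1 hm2 hm3 using hpart
  have hAdjSymm : ∀ i j, Adjd (DA A) i j → Adjd (DA A) j i :=
    fun i j h => ⟨h.1.symm, h.2.2, h.2.1⟩
  have hnpend : ∀ i, ¬ Pendant (DA A) i → Pendant (DA A) (m i) := fun i h => (hm3 i h).1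
  have hinv : ∀ i, m (m i) = i := by
    intro i
    by_cases hp : Pendant (DA A) (m i)
    · exact (hm2 (m i) hp i (hAdjSymm _ _ (hm1 i))).symm
    · have hip : Pendant (DA A) i := by
        by_contra h
        exact hp (hnpend i h)
      exact ((hm3 (m i) hp).2 i (hAdjSymm _ _ (hm1 i)) hip).symm
  have haA : ∀ i, A i (m i) ≠ 0 := fun i => (hm1 i).2.1
  have haA' : ∀ i, A (m i) i ≠ 0 := fun i => (hm1 i).2.2
  have hminj : ∀ i j, m i = m j → i = j := by
    intro i j h
    rw [← hinv i, h, hinv]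
  -- any nonzero entry from a pendant vertex goes to its partner
  have hLpend : ∀ i y, Pendant (DA A) i → A i y ≠ 0 → y = m i := by
    intro i y hp hne
    have hiy : i ≠ y := by
      rintro rfl
      exact hne (hdiag i)
    exact hm2 i hp y ⟨hiy, hne, hsymm _ _ hne⟩
  -- explicit inverse
  set X0 : Matrix (Fin n) (Fin n) ℝ := Matrix.of fun i j =>
    if j = m i then (A j i)⁻¹
    else -(A (m i) (m j) * (A (m i) i)⁻¹ * (A j (m j))⁻¹) with hX0def
  have hX0 : ∀ i j, X0 i j = if j = m i then (A j i)⁻¹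
      else -(A (m i) (m j) * (A (m i) i)⁻¹ * (A j (m j))⁻¹) := fun i j => rfl
  -- vanishing lemma
  have hvan : ∀ i k j : Fin n, j ≠ m i → j ≠ m k → A i j * X0 j k = 0 := by
    intro i k j hji hjk
    have hkj : k ≠ m j := fun h => hjk (by rw [h, hinv])
    rw [hX0, if_neg hkj]
    have hz : A i j = 0 ∨ A (m j) (m k) = 0 := by
      by_contra hc
      push_neg at hc
      obtain ⟨h1, h2⟩ := hc
      have hjk' : j ≠ k := by
        rintro rfl
        exact h2 (hdiag (m j))
      by_cases hp : Pendant (DA A) (m j)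
      · have := hLpend (m j) (m k) hp h2
        exact hjk (by rw [hminj k (m j) this, hinv])
      · have hjp : Pendant (DA A) j := by
          have := hnpend (m j) hp
          rwa [hinv] at this
        have hij : i ≠ j := by
          rintro rfl
          exact h1 (hdiag i)
        have := hLpend j i hjp (hsymm _ _ h1)
        exact hji (by rw [this, hinv])
    rcases hz with h | h <;> rw [h] <;> ring
  have hone : A * X0 = 1 := by
    ext i k
    rw [Matrix.mul_apply]
    have hsub : ({m i, m k} : Finset (Fin n)) ⊆ Finset.univ := Finset.subset_univ _
    have hsum : ∑ j ∈ ({m i, m k} : Finset (Fin n)), A i j * X0 j k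
        = ∑ j : Fin n, A i j * X0 j k := by
      apply Finset.sum_subset hsub
      intro j _ hj
      simp only [Finset.mem_insert, Finset.mem_singleton, not_or] at hj
      exact hvan i k j hj.1 hj.2
    rw [← hsum]
    by_cases hik : i = k
    · subst hik
      rw [show ({m i, m i} : Finset (Fin n)) = {m i} from Finset.insert_eq_self.mpr
        (Finset.mem_singleton_self _), Finset.sum_singleton, hX0, if_pos (hinv i).symm,
        Matrix.one_apply_eq]
      exact mul_inv_cancel₀ (haA i)
    · have hmne : m i ≠ m k := fun h => hik (hminj _ _ h)
      rw [Finset.sum_pair hmne, Matrix.one_apply_ne hik]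
      have hki : k ≠ m (m i) := by rw [hinv]; exact fun h => hik h.symm
      have e1 : X0 (m i) k = -(A i (m k) * (A i (m i))⁻¹ * (A k (m k))⁻¹) := by
        rw [hX0, if_neg hki, hinv]
      have e2 : X0 (m k) k = (A k (m k))⁻¹ := by
        rw [hX0, if_pos (hinv k).symm]
      rw [e1, e2]
      have h1 := haA i
      have h2 := haA k
      field_simp
      ring
  have hone' : X0 * A = 1 := mul_eq_one_comm.mp hone
  have hXeq : X = X0 := by
    have h1 := hX.1
    calc X = 1 * X * 1 := by rw [one_mul, mul_one]
      _ = (X0 * A) * X * (A * X0) := by rw [hone', hone]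
      _ = X0 * (A * X * A) * X0 := by simp only [Matrix.mul_assoc]
      _ = X0 * A * X0 := by rw [h1]
      _ = X0 := by rw [hone', one_mul]
  rw [hXeq]
  have hDA : DA X0 = fun i j => DA A (m i) (m j) := by
    funext i j
    simp only [DA, eq_iff_iff]
    by_cases hj : j = m i
    · subst hj
      rw [hX0, if_pos rfl, hinv]
      constructor
      · intro _; exact haA' i
      · intro _; exact inv_ne_zero (haA' i)
    · rw [hX0, if_neg hj]
      simp [neg_eq_zero, mul_eq_zero, inv_eq_zero, haA' i, haA j, haA]
  rw [hDA]
  exact isCorona_comp m hinv ⟨⟨hloop, hsymm⟩, hcorP⟩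
end
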